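/- Fix an integer n ≥ 1 and set P := (n+1)^{−1}·[f] in the quotient ring R/I, where [f] is the residue class of f. Then for all integers i, j with 0 ≤ i, j ≤ n, one has P^i · P^j = P^{(i+j) mod (n+1)}. Equivalently, in the basis P^0, P^1, …, P^n of R/I the structure constants of multiplication are A^k_{ij} = 1 if i + j ≡ k (mod n+1) and A^k_{ij} = 0 otherwise. -/

import Mathlib

open Complex

/-- The ring of Laurent polynomials `ℂ[x_1^{±1},…,x_n^{±1}]`. -/
abbrev LaurentR (n : ℕ) : Type := AddMonoidAlgebra ℂ (Fin n → ℤ)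

/-- The variable `x_i`. -/
noncomputable def LX (n : ℕ) (i : Fin n) : LaurentR n :=
  AddMonoidAlgebra.single (Pi.single i (1 : ℤ)) 1

/-- The monomial `(x_1⋯x_n)⁻¹`. -/
noncomputable def LXinv (n : ℕ) : LaurentR n :=
  AddMonoidAlgebra.single (fun _ => (-1 : ℤ)) 1

/-- The mirror superpotential `f = x_1 + ⋯ + x_n + (x_1⋯x_n)⁻¹`. -/
noncomputable def Lf (n : ℕ) : LaurentR n := (∑ i, LX n i) + LXinv n

/-- The Jacobian ideal `I = (x_1·∂f/∂x_1, …, x_n·∂f/∂x_n)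
  = (x_1 − (x_1⋯x_n)⁻¹, …, x_n − (x_1⋯x_n)⁻¹)`. -/
noncomputable def LI (n : ℕ) : Ideal (LaurentR n) :=
  Ideal.span (Set.range fun i : Fin n => LX n i - LXinv n)

/-!
Modulo `I` every variable `x_i` equals `u := (x_1⋯x_n)⁻¹`. Hence `[f] = (n+1)·u`, so
`P = u`, and `u^(n+1) = u^n · u = [x_1⋯x_n] · u = 1`; the exponents of `P` therefore add
modulo `n + 1`.
-/

theorem prod_LX_mul_LXinv (n : ℕ) : (∏ i, LX n i) * LXinv n = 1 := by
  simp only [LX, LXinv]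
  rw [AddMonoidAlgebra.prod_single, Finset.univ_sum_single, AddMonoidAlgebra.single_mul_single,
    Finset.prod_const_one, one_mul, AddMonoidAlgebra.one_def]
  congr 1

section JacobianQuotient

variable {n : ℕ}

local notation "π" => Ideal.Quotient.mk (LI n)

theorem mk_LX_eq_mk_LXinv (i : Fin n) : π (LX n i) = π (LXinv n) :=
  Ideal.Quotient.eq.mpr (Ideal.subset_span ⟨i, rfl⟩)

theorem mk_LXinv_pow_succ : π (LXinv n) ^ (n + 1) = 1 := by
  have hpow : π (LXinv n) ^ n = π (∏ i, LX n i) := by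
    simp [map_prod, mk_LX_eq_mk_LXinv]
  rw [pow_succ, hpow, ← map_mul, prod_LX_mul_LXinv, map_one]

theorem mk_Lf : π (Lf n) = ((n : ℂ) + 1) • π (LXinv n) := by
  rw [Lf, map_add, map_sum]
  simp only [mk_LX_eq_mk_LXinv, Finset.sum_const, Finset.card_univ, Fintype.card_fin]
  rw [← Nat.cast_smul_eq_nsmul ℂ, add_smul, one_smul]

theorem inv_smul_mk_Lf : ((n : ℂ) + 1)⁻¹ • π (Lf n) = π (LXinv n) := by
  rw [mk_Lf, inv_smul_smul₀ (Nat.cast_add_one_ne_zero n)]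

end JacobianQuotient

theorem laurent_jacobian_quantum_multiplication_general (n : ℕ) :
    ∀ i j : ℕ, i ≤ n → j ≤ n →
      (((n : ℂ) + 1)⁻¹ • Ideal.Quotient.mk (LI n) (Lf n)) ^ i *
          (((n : ℂ) + 1)⁻¹ • Ideal.Quotient.mk (LI n) (Lf n)) ^ j =
        (((n : ℂ) + 1)⁻¹ • Ideal.Quotient.mk (LI n) (Lf n)) ^ ((i + j) % (n + 1)) := by
  intro i j _ _
  rw [inv_smul_mk_Lf, ← pow_add, pow_eq_pow_mod (i + j) mk_LXinv_pow_succ]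

/-- With `P = (n+1)⁻¹·[f]` in `R/I`, one has `P^i·P^j = P^{(i+j) mod (n+1)}` for
`0 ≤ i,j ≤ n`: the structure constants of multiplication in the basis `P^0,…,P^n` are
`A^k_{ij} = δ_{i+j−k mod n+1, 0}`. -/
theorem laurent_jacobian_quantum_multiplication (n : ℕ) (hn : 1 ≤ n) :
    ∀ i j : ℕ, i ≤ n → j ≤ n →
      (((n : ℂ) + 1)⁻¹ • Ideal.Quotient.mk (LI n) (Lf n)) ^ i *
          (((n : ℂ) + 1)⁻¹ • Ideal.Quotient.mk (LI n) (Lf n)) ^ j =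
        (((n : ℂ) + 1)⁻¹ • Ideal.Quotient.mk (LI n) (Lf n)) ^ ((i + j) % (n + 1)) :=
  laurent_jacobian_quantum_multiplication_general n
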